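/- Null space of the network DtN map for q = 0. Assume q = 0, the graph G is connected, and the interior block (L_{γ,0})_{II} is invertible, and define Λ_{γ,0} = L_{BB} − L_{BI} L_{II}^{-1} L_{IB}. Then for f : B → ℝ one has Λ_{γ,0} f = 0 if and only if f is constant; that is, the null space of Λ_{γ,0} is one-dimensional and spanned by the all-ones vector 𝟙_B ∈ ℝ^B. -/

import Mathlib

/-!
Solving `(L u)_I = 0` for `u_I` through the invertible block `L_II` shows `(L u)_B = Λ (u_B)`
for every such `u`, and such a `u` with `u_B = f` exists for each `f`; hence `Λ f = 0` iff `f`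
is the restriction of some `u` with `L u = 0`.
For `q = 0` the kernel of `L` consists of the constants: at a maximum of `u`, `(L u)_i` is a sum of
nonnegative terms `γ i j (u i - u j)`, so `L u = 0` forces every neighbour of a maximiser to be
a maximiser, and connectedness spreads the maximum to all of `V`.
-/

open Matrix BigOperators

noncomputable def Lop {V : Type*} [Fintype V] (γ : V → V → ℝ) (q : V → ℝ)
    (u : V → ℝ) : V → ℝ :=
  fun i => (∑ j, γ i j * (u i - u j)) + q i * u i

noncomputable def Lmat {V : Type*} [Fintype V] [DecidableEq V]
    (γ : V → V → ℝ) (q : V → ℝ) : Matrix V V ℝ :=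
  Matrix.of fun i j => Lop γ q (Pi.single j 1) i

theorem SimpleGraph.Preconnected.of_adj_imp {V : Type*} {G : SimpleGraph V}
    (hG : G.Preconnected) {p : V → Prop} (hp : ∀ i j, G.Adj i j → p i → p j) {i : V}
    (hi : p i) (j : V) : p j := by
  obtain ⟨w⟩ := hG i j
  induction w with
  | nil => exact hi
  | cons hadj _ ih => exact ih (hp _ _ hadj hi)

section Schur

variable {V R : Type*} [Fintype V] [DecidableEq V] [CommRing R]

theorem mulVec_comp_eq_submatrix_mulVec_add {α : Type*} (L : Matrix V V R) (B : Finset V)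
    (e : α → V) (u : V → R) :
    (L *ᵥ u) ∘ e = L.submatrix e ((↑) : ↥B → V) *ᵥ (fun j : ↥B => u j)
      + L.submatrix e ((↑) : ↥(Bᶜ : Finset V) → V) *ᵥ (fun j : ↥(Bᶜ : Finset V) => u j) := by
  funext i
  simp only [Function.comp_apply, Pi.add_apply, mulVec, dotProduct, submatrix_apply]
  rw [← Finset.sum_add_sum_compl B, ← Finset.sum_coe_sort B, ← Finset.sum_coe_sort Bᶜ]

variable (L : Matrix V V R) (B : Finset V)

local notation "ι" => (Subtype.val : {x // x ∈ B} → V)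
local notation "κ" => (Subtype.val : {x // x ∈ Bᶜ} → V)

theorem schur_mulVec_eq_of_mulVec_eq_zero_on_compl (hinv : IsUnit (L.submatrix κ κ).det)
    (u : V → R) (hu : ∀ i : ↥(Bᶜ : Finset V), (L *ᵥ u) i = 0) :
    (L.submatrix ι ι - L.submatrix ι κ * (L.submatrix κ κ)⁻¹ * L.submatrix κ ι)
        *ᵥ (fun j : ↥B => u j) = (L *ᵥ u) ∘ ι := by
  rw [mulVec_comp_eq_submatrix_mulVec_add L B]
  set uB : ↥B → R := fun j => u j
  set uI : ↥(Bᶜ : Finset V) → R := fun j => u j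
  have hint : L.submatrix κ ι *ᵥ uB + L.submatrix κ κ *ᵥ uI = 0 := by
    rw [← mulVec_comp_eq_submatrix_mulVec_add]
    exact funext hu
  have huI : uI = -((L.submatrix κ κ)⁻¹ *ᵥ L.submatrix κ ι *ᵥ uB) := calc
    uI = ((L.submatrix κ κ)⁻¹ * L.submatrix κ κ) *ᵥ uI := by
      rw [nonsing_inv_mul _ hinv, one_mulVec]
    _ = (L.submatrix κ κ)⁻¹ *ᵥ -(L.submatrix κ ι *ᵥ uB) := by
      rw [← mulVec_mulVec, eq_neg_of_add_eq_zero_right hint]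
    _ = _ := by rw [mulVec_neg, mulVec_mulVec]
  rw [huI, sub_mulVec, mulVec_neg, ← mulVec_mulVec, ← mulVec_mulVec, sub_eq_add_neg]

theorem exists_extension_mulVec_eq_zero_on_compl (hinv : IsUnit (L.submatrix κ κ).det)
    (f : ↥B → R) :
    ∃ u : V → R, (fun j : ↥B => u j) = f ∧ ∀ i : ↥(Bᶜ : Finset V), (L *ᵥ u) i = 0 := by
  set g : ↥(Bᶜ : Finset V) → R := -((L.submatrix κ κ)⁻¹ *ᵥ L.submatrix κ ι *ᵥ f)
  let u : V → R := fun v => if h : v ∈ B then f ⟨v, h⟩ else g ⟨v, Finset.mem_compl.mpr h⟩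
  have huB : (fun j : ↥B => u j) = f := funext fun j => dif_pos j.2
  have huI : (fun j : ↥(Bᶜ : Finset V) => u j) = g :=
    funext fun j => dif_neg (Finset.mem_compl.mp j.2)
  have hLu : (L *ᵥ u) ∘ κ = 0 := by
    rw [mulVec_comp_eq_submatrix_mulVec_add L B, huB, huI, mulVec_neg, mulVec_mulVec,
      mul_nonsing_inv _ hinv, one_mulVec, add_neg_cancel]
  exact ⟨u, huB, congrFun hLu⟩

end Schur

section Laplacian

variable {V : Type*} [Fintype V]

theorem Lmat_mulVec [DecidableEq V] (γ : V → V → ℝ) (q : V → ℝ) (u : V → ℝ) :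
    Lmat γ q *ᵥ u = Lop γ q u := by
  funext i
  simp only [mulVec, dotProduct, Lmat, Lop, of_apply, Finset.sum_mul, add_mul,
    Finset.sum_add_distrib, mul_sub, sub_mul, Finset.sum_sub_distrib]
  rw [Finset.sum_comm]
  simp [Pi.single_apply]

theorem Lop_zero_apply_eq_of_forall_le {γ : V → V → ℝ} {u : V → ℝ} {i j : V}
    (hnn : ∀ k, 0 ≤ γ i k) (hmax : ∀ k, u k ≤ u i) (hLu : Lop γ 0 u i = 0) (hij : 0 < γ i j) :
    u j = u i := by
  have hterm_nonneg : ∀ k ∈ Finset.univ, 0 ≤ γ i k * (u i - u k) :=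
    fun k _ => mul_nonneg (hnn k) (sub_nonneg.mpr (hmax k))
  simp only [Lop, Pi.zero_apply, zero_mul, add_zero] at hLu
  have hj := (Finset.sum_eq_zero_iff_of_nonneg hterm_nonneg).mp hLu j (Finset.mem_univ j)
  rw [mul_eq_zero, sub_eq_zero] at hj
  exact (hj.resolve_left hij.ne').symm

theorem Lop_zero_eq_zero_iff {G : SimpleGraph V} (hconn : G.Connected) {γ : V → V → ℝ}
    (hpos : ∀ i j, G.Adj i j → 0 < γ i j) (hnn : ∀ i j, 0 ≤ γ i j) (u : V → ℝ) :
    Lop γ 0 u = 0 ↔ ∃ c, ∀ i, u i = c := by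
  constructor
  · intro hLu
    have := hconn.nonempty
    obtain ⟨m, hm⟩ := Finite.exists_max u
    refine ⟨u m, hconn.preconnected.of_adj_imp (p := fun v => u v = u m) ?_ rfl⟩
    intro i j hadj hi
    rw [← hi] at hm ⊢
    exact Lop_zero_apply_eq_of_forall_le (hnn i) hm (congrFun hLu i) (hpos i j hadj)
  · rintro ⟨c, hc⟩
    funext i
    simp [Lop, hc]

end Laplacian

theorem dtn_nullspace_constants_general
    {V : Type*} [Fintype V] [DecidableEq V]
    (G : SimpleGraph V)
    (γ : V → V → ℝ)
    (hpos : ∀ i j, G.Adj i j → 0 < γ i j)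
    (hzero : ∀ i j, ¬ G.Adj i j → γ i j = 0)
    (hconn : G.Connected)
    (B : Finset V)
    (LBB : Matrix ↥B ↥B ℝ) (LBI : Matrix ↥B ↥(Bᶜ) ℝ)
    (LIB : Matrix ↥(Bᶜ) ↥B ℝ) (LII : Matrix ↥(Bᶜ) ↥(Bᶜ) ℝ)
    (hLBB : LBB = (Lmat γ (0 : V → ℝ)).submatrix (fun i : ↥B => (i : V)) (fun j : ↥B => (j : V)))
    (hLBI : LBI = (Lmat γ (0 : V → ℝ)).submatrix (fun i : ↥B => (i : V)) (fun j : ↥(Bᶜ) => (j : V)))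
    (hLIB : LIB = (Lmat γ (0 : V → ℝ)).submatrix (fun i : ↥(Bᶜ) => (i : V)) (fun j : ↥B => (j : V)))
    (hLII : LII = (Lmat γ (0 : V → ℝ)).submatrix (fun i : ↥(Bᶜ) => (i : V)) (fun j : ↥(Bᶜ) => (j : V)))
    (hinv : IsUnit LII.det) :
    ∀ f : ↥B → ℝ, (LBB - LBI * LII⁻¹ * LIB).mulVec f = 0 ↔ ∃ c : ℝ, ∀ j, f j = c := by
  subst hLBB hLBI hLIB hLII
  have hnn : ∀ i j, 0 ≤ γ i j := fun i j =>
    (em (G.Adj i j)).elim (fun h => (hpos i j h).le) (fun h => (hzero i j h).ge)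
  have hker : ∀ u, Lmat γ 0 *ᵥ u = 0 ↔ ∃ c, ∀ i, u i = c := fun u => by
    rw [Lmat_mulVec]
    exact Lop_zero_eq_zero_iff hconn hpos hnn u
  intro f
  constructor
  · intro hΛ
    obtain ⟨u, rfl, hint⟩ := exists_extension_mulVec_eq_zero_on_compl _ B hinv f
    have hbd := schur_mulVec_eq_of_mulVec_eq_zero_on_compl _ B hinv u hint
    rw [hΛ] at hbd
    have hLu : Lmat γ 0 *ᵥ u = 0 := funext fun v =>
      if hv : v ∈ B then (congrFun hbd ⟨v, hv⟩).symm else hint ⟨v, Finset.mem_compl.mpr hv⟩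
    obtain ⟨c, hc⟩ := (hker u).mp hLu
    exact ⟨c, fun j => hc j⟩
  · rintro ⟨c, hc⟩
    have hLc := (hker fun _ => c).mpr ⟨c, fun _ => rfl⟩
    obtain rfl : f = fun _ => c := funext hc
    have hbd := schur_mulVec_eq_of_mulVec_eq_zero_on_compl _ B hinv (fun _ => c)
      fun i => by rw [hLc]; rfl
    rw [hbd, hLc]
    rfl

/-- Null space of the network DtN map for `q = 0`: if `G` is connected, then
`Λ_{γ,0} f = 0` iff `f` is constant, i.e. the null space of
`Λ_{γ,0} = L_BB − L_BI L_II⁻¹ L_IB` is spanned by the all-ones vector. -/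
theorem dtn_nullspace_constants
    {V : Type*} [Fintype V] [DecidableEq V]
    (G : SimpleGraph V) [DecidableRel G.Adj]
    (γ : V → V → ℝ) (hsymm : ∀ i j, γ i j = γ j i)
    (hpos : ∀ i j, G.Adj i j → 0 < γ i j)
    (hzero : ∀ i j, ¬ G.Adj i j → γ i j = 0)
    (hconn : G.Connected)
    (B : Finset V) (hB : B.Nonempty) (hI : (Bᶜ : Finset V).Nonempty)
    (LBB : Matrix ↥B ↥B ℝ) (LBI : Matrix ↥B ↥(Bᶜ) ℝ)
    (LIB : Matrix ↥(Bᶜ) ↥B ℝ) (LII : Matrix ↥(Bᶜ) ↥(Bᶜ) ℝ)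
    (hLBB : LBB = (Lmat γ (0 : V → ℝ)).submatrix (fun i : ↥B => (i : V)) (fun j : ↥B => (j : V)))
    (hLBI : LBI = (Lmat γ (0 : V → ℝ)).submatrix (fun i : ↥B => (i : V)) (fun j : ↥(Bᶜ) => (j : V)))
    (hLIB : LIB = (Lmat γ (0 : V → ℝ)).submatrix (fun i : ↥(Bᶜ) => (i : V)) (fun j : ↥B => (j : V)))
    (hLII : LII = (Lmat γ (0 : V → ℝ)).submatrix (fun i : ↥(Bᶜ) => (i : V)) (fun j : ↥(Bᶜ) => (j : V)))
    (hinv : IsUnit LII.det) :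
    ∀ f : ↥B → ℝ, (LBB - LBI * LII⁻¹ * LIB).mulVec f = 0 ↔ ∃ c : ℝ, ∀ j, f j = c :=
  dtn_nullspace_constants_general G γ hpos hzero hconn B LBB LBI LIB LII hLBB hLBI hLIB hLII hinv
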